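/- Given any integer n ≥ 2 (prime or composite), d ≥ 1, α > 2, positive weights γ with γ_∅ = 1, M > 0, and any generating vector z ∈ U_n^d, the quantity sum(T) satisfies sum(T) ≤ M · [S_{n,d,α/2,√γ}(z)]², where S_{n,d,α/2,√γ}(z) is defined as S_{n,d,α,γ}(z) but with α replaced by α/2 and every weight γ_u replaced by √γ_u. -/

import Mathlib

open Finset

noncomputable section

/-- `zetaR x = Σ_{h ≥ 1} h^{-x}`, the Riemann zeta function on reals. -/
def zetaR (x : ℝ) : ℝ := ∑' n : ℕ+, (n : ℝ) ^ (-x)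

/-- `Un n = {z ∈ ℤ : 1 ≤ z ≤ n-1, gcd(z,n) = 1}`. -/
def Un (n : ℕ) : Finset ℕ := (Finset.range n).filter fun z => 1 ≤ z ∧ Nat.gcd z n = 1

/-- The support of an integer vector. -/
def supp {k : ℕ} (h : Fin k → ℤ) : Finset (Fin k) := Finset.univ.filter fun j => h j ≠ 0

/-- `r'(h) = ∏_{j ∈ supp h} |h_j|^α`. -/
def rp {k : ℕ} (α : ℝ) (h : Fin k → ℤ) : ℝ := ∏ j ∈ supp h, |(h j : ℝ)| ^ α

/-- `r_{d,α,γ}(h) = (1/γ_{supp h}) ∏_{j ∈ supp h} |h_j|^α`. -/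
def rK {k : ℕ} (α : ℝ) (γ : Finset (Fin k) → ℝ) (h : Fin k → ℤ) : ℝ := rp α h / γ (supp h)

/-- `ℓ · z ≡ 0 (mod n)`. -/
def dotMod (n : ℕ) {k : ℕ} (ℓ : Fin k → ℤ) (z : Fin k → ℕ) : Prop :=
  (n : ℤ) ∣ ∑ j, ℓ j * (z j : ℤ)

/-- The search criterion `S_{n,d,α,γ}(z)`. -/
def Sq (n : ℕ) {k : ℕ} (α : ℝ) (γ : Finset (Fin k) → ℝ) (z : Fin k → ℕ) : ℝ :=
  ∑' h : Fin k → ℤ, (1 / rK α γ h) *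
    ∑' ℓ : {ℓ : Fin k → ℤ // ℓ ≠ 0 ∧ dotMod n ℓ z}, 1 / rK α γ (h + ℓ.1)

/-- `θ_{n,s+1,α}(z; β)`. -/
def theta (n : ℕ) (α : ℝ) {s : ℕ} (z : Fin (s+1) → ℕ) (β : Finset (Fin (s+1)) → ℝ) : ℝ :=
  ∑' h : Fin (s+1) → ℤ,
    ∑' ℓ : {ℓ : Fin (s+1) → ℤ // ℓ (Fin.last s) ≠ 0 ∧ dotMod n ℓ z},
      (β (supp h) / rp α h) * (β (supp (h + ℓ.1)) / rp α (h + ℓ.1))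

/-- `T_{n,d,s+1,α,γ}(z_1,…,z_{s+1})`. -/
def Tcrit (n : ℕ) {d : ℕ} (α : ℝ) (γ : Finset (Fin d) → ℝ) (s : ℕ) (hs : s + 1 ≤ d)
    (z : Fin (s+1) → ℕ) : ℝ :=
  ∑ w ∈ (Finset.univ.filter fun j : Fin d => s + 1 ≤ (j : ℕ)).powerset,
    (2 * zetaR (2*α)) ^ w.card *
      theta n α z (fun u => γ (u.map ⟨Fin.castLE hs, Fin.castLE_injective hs⟩ ∪ w))

/-- `z` is obtained by the component-by-component construction. -/
def IsCBC (n : ℕ) {d : ℕ} (α : ℝ) (γ : Finset (Fin d) → ℝ) (z : Fin d → ℕ) : Prop :=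
  (∀ j, z j ∈ Un n) ∧
  ∀ (s : ℕ) (hs : s + 1 ≤ d), ∀ w ∈ Un n,
    Tcrit n α γ s hs (fun j => z (Fin.castLE hs j)) ≤
      Tcrit n α γ s hs (Fin.snoc (fun j : Fin s => z (Fin.castLE (Nat.le_of_succ_le hs) j)) w)

/-- The quantity `sum(T)` of Lemma 5.1 / (5.3). -/
def SumT (n : ℕ) {d : ℕ} (α : ℝ) (γ : Finset (Fin d) → ℝ) (z : Fin d → ℕ) (M : ℝ) : ℝ :=
  ∑' h : {h : Fin d → ℤ // rK α γ h ≤ M},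
    ∑' p : {p : Fin d → ℤ // rK α γ p ≤ M ∧ dotMod n (p - h.1) z},
      ∑' ℓ : {ℓ : Fin d → ℤ // ℓ ≠ 0 ∧ ℓ ≠ p.1 - h.1 ∧ dotMod n ℓ z},
        1 / rK α γ (h.1 + ℓ.1)

-- Auxiliary lemmas
lemma rp_pos {k : ℕ} (β : ℝ) (h : Fin k → ℤ) : 0 < rp β h := by
  apply Finset.prod_pos
  intro j hj
  have hne : h j ≠ 0 := by simpa [supp] using hj
  apply Real.rpow_pos_of_pos
  have : (0:ℤ) < |h j| := abs_pos.mpr hne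
  rw [← Int.cast_abs]
  exact_mod_cast this

lemma rK_pos {k : ℕ} {β : ℝ} {δ : Finset (Fin k) → ℝ} (hδ : ∀ u, 0 < δ u) (h : Fin k → ℤ) :
    0 < rK β δ h := div_pos (rp_pos β h) (hδ _)

lemma rp_sq {k : ℕ} (α : ℝ) (h : Fin k → ℤ) : rp α h = rp (α/2) h ^ 2 := by
  unfold rp
  rw [← Finset.prod_pow]
  apply Finset.prod_congr rfl
  intro j _
  rw [← Real.rpow_natCast (|(h j:ℝ)| ^ (α/2)) 2, ← Real.rpow_mul (abs_nonneg _)]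
  norm_num

lemma rK_sq {k : ℕ} (α : ℝ) (γ : Finset (Fin k) → ℝ) (hγ : ∀ u, 0 < γ u) (h : Fin k → ℤ) :
    rK α γ h = rK (α/2) (fun u => Real.sqrt (γ u)) h ^ 2 := by
  unfold rK
  rw [div_pow, ← rp_sq, Real.sq_sqrt (hγ _).le]

lemma dotMod_sub {n k : ℕ} {a b : Fin k → ℤ} {z : Fin k → ℕ}
    (ha : dotMod n a z) (hb : dotMod n b z) : dotMod n (a - b) z := by
  unfold dotMod at *
  have : ∑ j, (a - b) j * (z j : ℤ) = (∑ j, a j * z j) - ∑ j, b j * z j := by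
    rw [← Finset.sum_sub_distrib]
    exact Finset.sum_congr rfl fun j _ => by simp [sub_mul]
  rw [this]
  exact dvd_sub ha hb

lemma summable_f {p : ℝ} (hp : 1 < p) :
    Summable (fun m : ℤ => if m = 0 then (1:ℝ) else |(m:ℝ)| ^ (-p)) := by
  have h := (Real.summable_abs_int_rpow hp).update 0 1
  apply h.congr
  intro m
  by_cases hm : m = 0 <;> simp [Function.update_apply, hm]

lemma summable_prod_pi {f : ℤ → ℝ} (hf0 : ∀ m, 0 ≤ f m) (hf : Summable f) (k : ℕ) :
    Summable (fun h : Fin k → ℤ => ∏ j, f (h j)) := by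
  induction k with
  | zero => exact Summable.of_finite
  | succ k ih =>
    have h2 : Summable (fun x : ℤ × (Fin k → ℤ) => f x.1 * ∏ j, f (x.2 j)) := by
      have n1 : Summable (fun m : ℤ => ‖f m‖) :=
        hf.congr fun m => (Real.norm_of_nonneg (hf0 m)).symm
      have n2 : Summable (fun h : Fin k → ℤ => ‖∏ j, f (h j)‖) :=
        ih.congr fun h => (Real.norm_of_nonneg (Finset.prod_nonneg fun j _ => hf0 _)).symm
      apply summable_mul_of_summable_norm n1 n2
    rw [← (Fin.consEquiv fun _ => ℤ).summable_iff]
    apply h2.congr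
    intro x
    simp [Fin.consEquiv, Fin.prod_univ_succ]

lemma summable_inv_rK {k : ℕ} {p : ℝ} (hp : 1 < p) {δ : Finset (Fin k) → ℝ}
    (hδ : ∀ u, 0 < δ u) : Summable (fun h : Fin k → ℤ => 1 / rK p δ h) := by
  set f : ℤ → ℝ := fun m => if m = 0 then (1:ℝ) else |(m:ℝ)| ^ (-p) with hf
  have hf0 : ∀ m, 0 ≤ f m := by
    intro m
    by_cases hm : m = 0 <;> simp [hf, hm, Real.rpow_natCast]
    positivity
  have key : ∀ h : Fin k → ℤ, 1 / rK p δ h = δ (supp h) * ∏ j, f (h j) := by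
    intro h
    unfold rK
    rw [one_div_div]
    rw [div_eq_mul_inv]
    congr 1
    unfold rp
    rw [← Finset.prod_inv_distrib]
    have e1 : ∀ j ∈ supp h, (|(h j : ℝ)| ^ p)⁻¹ = f (h j) := by
      intro j hj
      have hne : h j ≠ 0 := by simpa [supp] using hj
      rw [hf]
      simp only [hne, if_false]
      rw [Real.rpow_neg (abs_nonneg _)]
    rw [Finset.prod_congr rfl e1]
    apply Finset.prod_subset (Finset.subset_univ _)
    intro j _ hj
    have : h j = 0 := by simpa [supp] using hj
    simp [hf, this]
  have hsum : Summable (fun h : Fin k → ℤ => (∑ u : Finset (Fin k), δ u) * ∏ j, f (h j)) :=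
    (summable_prod_pi hf0 (summable_f hp) k).mul_left _
  apply Summable.of_nonneg_of_le _ _ hsum
  · intro h
    rw [key]
    exact mul_nonneg (hδ _).le (Finset.prod_nonneg fun j _ => hf0 _)
  · intro h
    rw [key]
    apply mul_le_mul_of_nonneg_right _ (Finset.prod_nonneg fun j _ => hf0 _)
    exact Finset.single_le_sum (fun u _ => (hδ u).le) (Finset.mem_univ _)

/-- Lemma 5.4, second bound: for `α > 2`,
`sum(T) ≤ M · [S_{n,d,α/2,√γ}(z)]²`. -/
theorem stmt10 (n d : ℕ) (hn : 2 ≤ n) (hd : 1 ≤ d) (α : ℝ) (hα : 2 < α)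
    (γ : Finset (Fin d) → ℝ) (hγpos : ∀ u, 0 < γ u) (hγ0 : γ ∅ = 1)
    (M : ℝ) (hM : 0 < M) (z : Fin d → ℕ) (hz : ∀ j, z j ∈ Un n) :
    SumT n α γ z M ≤ M * (Sq n (α/2) (fun u => Real.sqrt (γ u)) z) ^ 2 := by
  classical
  set δ : Finset (Fin d) → ℝ := fun u => Real.sqrt (γ u) with hδdef
  have hδ : ∀ u, 0 < δ u := fun u => Real.sqrt_pos.mpr (hγpos u)
  have hp : 1 < α / 2 := by linarith
  have hα1 : 1 < α := by linarith
  have hr' : ∀ h : Fin d → ℤ, 0 < rK (α/2) δ h := fun h => rK_pos hδ h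
  have hrKpos : ∀ h : Fin d → ℤ, 0 < rK α γ h := fun h => rK_pos hγpos h
  have hsq : ∀ h : Fin d → ℤ, rK α γ h = rK (α/2) δ h ^ 2 := fun h => rK_sq α γ hγpos h
  have Sm : Summable (fun h : Fin d → ℤ => 1 / rK (α/2) δ h) := summable_inv_rK hp hδ
  have SmA : Summable (fun h : Fin d → ℤ => 1 / rK α γ h) := summable_inv_rK hα1 hγpos
  have nn' : ∀ c : Fin d → ℤ, 0 ≤ 1 / rK (α/2) δ c := fun c => (one_div_pos.mpr (hr' c)).le
  have nnA : ∀ c : Fin d → ℤ, 0 ≤ 1 / rK α γ c := fun c => (one_div_pos.mpr (hrKpos c)).le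
  have SmT : ∀ c : Fin d → ℤ, Summable (fun ℓ : Fin d → ℤ => 1 / rK (α/2) δ (c + ℓ)) := by
    intro c
    have := (Equiv.addLeft c).summable_iff.mpr Sm
    simpa [Function.comp_def, Equiv.coe_addLeft] using this
  have SmTA : ∀ c : Fin d → ℤ, Summable (fun ℓ : Fin d → ℤ => 1 / rK α γ (c + ℓ)) := by
    intro c
    have := (Equiv.addLeft c).summable_iff.mpr SmA
    simpa [Function.comp_def, Equiv.coe_addLeft] using this
  have SmTL : ∀ c : Fin d → ℤ,
      Summable (fun ℓ : {ℓ : Fin d → ℤ // ℓ ≠ 0 ∧ dotMod n ℓ z} => 1 / rK (α/2) δ (c + ℓ.1)) :=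
    fun c => (SmT c).comp_injective Subtype.val_injective
  have SmTLn : ∀ c : Fin d → ℤ,
      Summable (fun ℓ : {ℓ : Fin d → ℤ // ℓ ≠ 0 ∧ dotMod n ℓ z} => ‖1 / rK (α/2) δ (c + ℓ.1)‖) :=
    fun c => (SmTL c).congr fun ℓ => (Real.norm_of_nonneg (nn' _)).symm
  set T : (Fin d → ℤ) → ℝ :=
    fun c => ∑' ℓ : {ℓ : Fin d → ℤ // ℓ ≠ 0 ∧ dotMod n ℓ z}, 1 / rK (α/2) δ (c + ℓ.1) with hT
  have hTnn : ∀ c, 0 ≤ T c := fun c => tsum_nonneg fun ℓ => nn' _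
  set Stot : ℝ := ∑' x : Fin d → ℤ, 1 / rK (α/2) δ x with hStot
  have hStotnn : 0 ≤ Stot := tsum_nonneg nn'
  have hT_le : ∀ c, T c ≤ Stot := by
    intro c
    have h1 : T c ≤ ∑' ℓ : Fin d → ℤ, 1 / rK (α/2) δ (c + ℓ) :=
      Summable.tsum_le_tsum_of_inj Subtype.val Subtype.val_injective (fun x _ => nn' _)
        (fun ℓ => le_rfl) (SmTL c) (SmT c)
    have h2 : ∑' ℓ : Fin d → ℤ, 1 / rK (α/2) δ (c + ℓ) = Stot := by
      rw [hStot]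
      exact (Equiv.addLeft c).tsum_eq (fun x => 1 / rK (α/2) δ x)
    linarith
  set G : (Fin d → ℤ) → ℝ := fun c => (1 / rK (α/2) δ c) * T c with hG
  have hGnn : ∀ c, 0 ≤ G c := fun c => mul_nonneg (nn' c) (hTnn c)
  have SmG : Summable G := by
    apply Summable.of_nonneg_of_le hGnn (fun c => ?_) (Sm.mul_right Stot)
    exact mul_le_mul_of_nonneg_left (hT_le c) (nn' c)
  have hSqeq : Sq n (α/2) δ z = ∑' c, G c := by
    rw [hG, hT]; rfl
  have hSqnn : 0 ≤ Sq n (α/2) δ z := hSqeq ▸ tsum_nonneg hGnn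
  -- claim 1: inner bound for fixed h, p
  have claim1 : ∀ h p : Fin d → ℤ, rK α γ h ≤ M → rK α γ p ≤ M → dotMod n (p - h) z →
      (∑' ℓ : {ℓ : Fin d → ℤ // ℓ ≠ 0 ∧ ℓ ≠ p - h ∧ dotMod n ℓ z}, 1 / rK α γ (h + ℓ.1))
        ≤ M * G h * G p := by
    intro h p hhM hpM hdot
    have prodEq : T h * T p =
        ∑' x : {ℓ : Fin d → ℤ // ℓ ≠ 0 ∧ dotMod n ℓ z} × {ℓ : Fin d → ℤ // ℓ ≠ 0 ∧ dotMod n ℓ z},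
          (1 / rK (α/2) δ (h + x.1.1)) * (1 / rK (α/2) δ (p + x.2.1)) := by
      rw [hT]
      exact tsum_mul_tsum_of_summable_norm (SmTLn h) (SmTLn p)
    have step1 : (∑' ℓ : {ℓ : Fin d → ℤ // ℓ ≠ 0 ∧ ℓ ≠ p - h ∧ dotMod n ℓ z},
        1 / rK α γ (h + ℓ.1)) ≤ T h * T p := by
      rw [prodEq]
      refine Summable.tsum_le_tsum_of_inj
        (fun ℓ => (⟨ℓ.1, ℓ.2.1, ℓ.2.2.2⟩,
          ⟨ℓ.1 - (p - h), sub_ne_zero.mpr ℓ.2.2.1, dotMod_sub ℓ.2.2.2 hdot⟩))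
        ?_ (fun x _ => mul_nonneg (nn' _) (nn' _)) (fun ℓ => ?_)
        ((SmTA h).comp_injective Subtype.val_injective) ?_
      · intro a b hab
        apply Subtype.ext
        exact congrArg (fun x => x.1.1) hab
      · refine le_of_eq ?_
        have he : p + (ℓ.1 - (p - h)) = h + ℓ.1 := by abel
        rw [he, hsq (h + ℓ.1), sq, one_div_mul_one_div]
      · have n1 := SmTLn h
        have n2 := SmTLn p
        apply summable_mul_of_summable_norm n1 n2
    have hsqrt : ∀ c : Fin d → ℤ, rK α γ c ≤ M → rK (α/2) δ c ≤ Real.sqrt M := by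
      intro c hc
      have h0 : rK (α/2) δ c = Real.sqrt (rK (α/2) δ c ^ 2) := (Real.sqrt_sq (hr' c).le).symm
      rw [h0]
      exact Real.sqrt_le_sqrt (by rw [← hsq c]; exact hc)
    have hfac : ∀ c : Fin d → ℤ, rK α γ c ≤ M →
        T c ≤ (Real.sqrt M * (1 / rK (α/2) δ c)) * T c := by
      intro c hc
      apply le_mul_of_one_le_left (hTnn c)
      rw [mul_one_div, le_div_iff₀ (hr' c), one_mul]
      exact hsqrt c hc
    have step2 : T h * T p ≤ M * G h * G p := by
      have e1 := hfac h hhM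
      have e2 := hfac p hpM
      have e3 : T h * T p ≤
          (Real.sqrt M * (1 / rK (α/2) δ h) * T h) * (Real.sqrt M * (1 / rK (α/2) δ p) * T p) :=
        mul_le_mul e1 e2 (hTnn p)
          (mul_nonneg (mul_nonneg (Real.sqrt_nonneg M) (nn' h)) (hTnn h))
      have e4 : (Real.sqrt M * (1 / rK (α/2) δ h) * T h) * (Real.sqrt M * (1 / rK (α/2) δ p) * T p)
          = M * G h * G p := by
        have hMs : Real.sqrt M * Real.sqrt M = M := Real.mul_self_sqrt hM.le
        simp only [hG]
        calc (Real.sqrt M * (1 / rK (α/2) δ h) * T h) * (Real.sqrt M * (1 / rK (α/2) δ p) * T p)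
            = (Real.sqrt M * Real.sqrt M) * ((1 / rK (α/2) δ h) * T h) * ((1 / rK (α/2) δ p) * T p) := by
              ring
          _ = M * ((1 / rK (α/2) δ h) * T h) * ((1 / rK (α/2) δ p) * T p) := by rw [hMs]
      linarith
    linarith
  -- assemble
  have claim3 : ∀ h : {h : Fin d → ℤ // rK α γ h ≤ M},
      (∑' p : {p : Fin d → ℤ // rK α γ p ≤ M ∧ dotMod n (p - h.1) z},
        ∑' ℓ : {ℓ : Fin d → ℤ // ℓ ≠ 0 ∧ ℓ ≠ p.1 - h.1 ∧ dotMod n ℓ z},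
          1 / rK α γ (h.1 + ℓ.1))
      ≤ (M * Sq n (α/2) δ z) * G h.1 := by
    intro h
    have inner_nn : ∀ p : {p : Fin d → ℤ // rK α γ p ≤ M ∧ dotMod n (p - h.1) z},
        0 ≤ ∑' ℓ : {ℓ : Fin d → ℤ // ℓ ≠ 0 ∧ ℓ ≠ p.1 - h.1 ∧ dotMod n ℓ z},
          1 / rK α γ (h.1 + ℓ.1) :=
      fun p => tsum_nonneg fun ℓ => nnA _
    have bnd : ∀ p : {p : Fin d → ℤ // rK α γ p ≤ M ∧ dotMod n (p - h.1) z},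
        (∑' ℓ : {ℓ : Fin d → ℤ // ℓ ≠ 0 ∧ ℓ ≠ p.1 - h.1 ∧ dotMod n ℓ z},
          1 / rK α γ (h.1 + ℓ.1)) ≤ (M * G h.1) * G p.1 := by
      intro p
      have := claim1 h.1 p.1 h.2 p.2.1 p.2.2
      calc (∑' ℓ : {ℓ : Fin d → ℤ // ℓ ≠ 0 ∧ ℓ ≠ p.1 - h.1 ∧ dotMod n ℓ z},
            1 / rK α γ (h.1 + ℓ.1)) ≤ M * G h.1 * G p.1 := this
        _ = (M * G h.1) * G p.1 := by ring
    have SmRHS : Summable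
        (fun p : {p : Fin d → ℤ // rK α γ p ≤ M ∧ dotMod n (p - h.1) z} => (M * G h.1) * G p.1) :=
      (SmG.mul_left (M * G h.1)).comp_injective Subtype.val_injective
    have SmLHS := Summable.of_nonneg_of_le inner_nn bnd SmRHS
    have t1 := Summable.tsum_le_tsum bnd SmLHS SmRHS
    have t2 : (∑' p : {p : Fin d → ℤ // rK α γ p ≤ M ∧ dotMod n (p - h.1) z},
        (M * G h.1) * G p.1) = (M * G h.1) *
          ∑' p : {p : Fin d → ℤ // rK α γ p ≤ M ∧ dotMod n (p - h.1) z}, G p.1 := tsum_mul_left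
    have t3 : (∑' p : {p : Fin d → ℤ // rK α γ p ≤ M ∧ dotMod n (p - h.1) z}, G p.1)
        ≤ ∑' c, G c :=
      Summable.tsum_le_tsum_of_inj Subtype.val Subtype.val_injective (fun c _ => hGnn c)
        (fun p => le_rfl) (SmG.comp_injective Subtype.val_injective) SmG
    have hMGnn : 0 ≤ M * G h.1 := mul_nonneg hM.le (hGnn _)
    have t4 := mul_le_mul_of_nonneg_left t3 hMGnn
    rw [hSqeq]
    calc (∑' p : {p : Fin d → ℤ // rK α γ p ≤ M ∧ dotMod n (p - h.1) z},
          ∑' ℓ : {ℓ : Fin d → ℤ // ℓ ≠ 0 ∧ ℓ ≠ p.1 - h.1 ∧ dotMod n ℓ z},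
            1 / rK α γ (h.1 + ℓ.1))
        ≤ (M * G h.1) * ∑' p : {p : Fin d → ℤ // rK α γ p ≤ M ∧ dotMod n (p - h.1) z}, G p.1 := by
          rw [← t2]; exact t1
      _ ≤ (M * G h.1) * ∑' c, G c := t4
      _ = (M * (∑' c, G c)) * G h.1 := by ring
  have SmORHS : Summable (fun h : {h : Fin d → ℤ // rK α γ h ≤ M} =>
      (M * Sq n (α/2) δ z) * G h.1) :=
    (SmG.mul_left (M * Sq n (α/2) δ z)).comp_injective Subtype.val_injective
  have outer_nn : ∀ h : {h : Fin d → ℤ // rK α γ h ≤ M},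
      0 ≤ ∑' p : {p : Fin d → ℤ // rK α γ p ≤ M ∧ dotMod n (p - h.1) z},
        ∑' ℓ : {ℓ : Fin d → ℤ // ℓ ≠ 0 ∧ ℓ ≠ p.1 - h.1 ∧ dotMod n ℓ z},
          1 / rK α γ (h.1 + ℓ.1) :=
    fun h => tsum_nonneg fun p => tsum_nonneg fun ℓ => nnA _
  have SmOLHS := Summable.of_nonneg_of_le outer_nn claim3 SmORHS
  have main := Summable.tsum_le_tsum claim3 SmOLHS SmORHS
  have tlast : (∑' h : {h : Fin d → ℤ // rK α γ h ≤ M}, (M * Sq n (α/2) δ z) * G h.1)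
      = (M * Sq n (α/2) δ z) * ∑' h : {h : Fin d → ℤ // rK α γ h ≤ M}, G h.1 := tsum_mul_left
  have tsub : (∑' h : {h : Fin d → ℤ // rK α γ h ≤ M}, G h.1) ≤ ∑' c, G c :=
    Summable.tsum_le_tsum_of_inj Subtype.val Subtype.val_injective (fun c _ => hGnn c)
      (fun p => le_rfl) (SmG.comp_injective Subtype.val_injective) SmG
  have hMSqnn : 0 ≤ M * Sq n (α/2) δ z := mul_nonneg hM.le hSqnn
  have final := mul_le_mul_of_nonneg_left tsub hMSqnn
  unfold SumT
  calc (∑' h : {h : Fin d → ℤ // rK α γ h ≤ M},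
        ∑' p : {p : Fin d → ℤ // rK α γ p ≤ M ∧ dotMod n (p - h.1) z},
          ∑' ℓ : {ℓ : Fin d → ℤ // ℓ ≠ 0 ∧ ℓ ≠ p.1 - h.1 ∧ dotMod n ℓ z},
            1 / rK α γ (h.1 + ℓ.1))
      ≤ (M * Sq n (α/2) δ z) * ∑' h : {h : Fin d → ℤ // rK α γ h ≤ M}, G h.1 := by
        rw [← tlast]; exact main
    _ ≤ (M * Sq n (α/2) δ z) * ∑' c, G c := final
    _ = M * (Sq n (α/2) δ z) ^ 2 := by rw [← hSqeq]; ring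


end
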